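/- arXiv:1702.05051 — 6 statements merged into one kernel-verified Lean document; each statement's English description precedes it below -/
import Mathlib

section
/- For every ordered tree of height h with at most ℓ leaves (ℓ ≥ 1), there exists an order-preserving relabelling (tree coding) of branching directions by finite binary strings, ordered as above, such that the resulting tree is isomorphic as an ordered tree to the original one, and for every leaf, the total number of bits used along the navigation path from the root to that leaf is at most ⌈lg ℓ⌉. -/
/-- The strict order on finite binary strings:
`0s < ε`, `ε < 1s`, `bs < bs' iff s < s'`, and `0s < 1s'`. -/
def bslt : List Bool → List Bool → Prop
  | [], [] => False
  | b :: _, [] => b = false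
  | [], b :: _ => b = true
  | a :: s, b :: t => (a = false ∧ b = true) ∨ (a = b ∧ bslt s t)

open Classical in
/-- The leaves of an ordered tree `T` (a prefix-closed finite set of sequences of
branching directions): the maximal nodes w.r.t. the prefix ordering. -/
noncomputable def leaves {D : Type*} (T : Finset (List D)) : Finset (List D) :=
  T.filter (fun p => ∀ d : D, p ++ [d] ∉ T)

/-- Total number of bits along the navigation path `p`, where the (adaptive) coding `c`
labels the branching direction `d` at node `q` by the binary string `c q d`. -/
def pathBits {D : Type*} (c : List D → D → List Bool) : List D → ℕ
  | [] => 0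
  | d :: rest => (c [] d).length + pathBits (fun q d' => c (d :: q) d') rest

/-!
Weight every node by the number of leaves below it. At a node of weight `W` whose children
have weights `wᵢ` (so `∑ wᵢ ≤ W`), the children can be labelled order-preservingly by binary
strings `sᵢ` with `|sᵢ| + ⌈lg wᵢ⌉ ≤ ⌈lg W⌉`. Along a root-to-leaf path these bounds
telescope, so the path uses at most `⌈lg (number of leaves)⌉` bits.
-/

theorem bslt_asymm : ∀ {s t : List Bool}, bslt s t → ¬ bslt t s
  | [], [] => fun h => h.elim
  | _ :: _, [] => by simp_all [bslt]
  | [], _ :: _ => by simp_all [bslt]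
  | a :: s, b :: t => by
      simp only [bslt]
      have := @bslt_asymm s t
      grind

theorem lt_iff_bslt_of_forall_lt {ι : Type*} [LinearOrder ι] {f : ι → List Bool} {i j : ι}
    (hij : i < j → bslt (f i) (f j)) (hji : j < i → bslt (f j) (f i)) :
    i < j ↔ bslt (f i) (f j) := by
  refine ⟨hij, fun h => ?_⟩
  rcases lt_trichotomy i j with hlt | rfl | hgt
  · exact hlt
  · exact absurd h (bslt_asymm h)
  · exact absurd (hji hgt) (bslt_asymm h)

theorem Finset.exists_pivot_of_lt_sum {ι : Type*} [LinearOrder ι] (w : ι → ℕ) (B : ℕ)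
    (S : Finset ι) :
    B < ∑ i ∈ S, w i →
      ∃ a ∈ S, ∑ i ∈ S with i < a, w i ≤ B ∧ B < ∑ i ∈ S with i < a, w i + w a := by
  induction S using Finset.induction_on_max with
  | empty => simp
  | insert a s hlt ih =>
    intro hB
    have ha : a ∉ s := fun h => lt_irrefl a (hlt a h)
    rw [Finset.sum_insert ha] at hB
    by_cases hs : B < ∑ i ∈ s, w i
    · obtain ⟨b, hb, h⟩ := ih hs
      have : ¬ a < b := (hlt b hb).not_gt
      refine ⟨b, Finset.mem_insert_of_mem hb, ?_⟩
      simpa [Finset.filter_insert, this] using h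
    · have : (insert a s).filter (· < a) = s := by
        rw [Finset.filter_insert, if_neg (lt_irrefl a), Finset.filter_true_of_mem hlt]
      refine ⟨a, Finset.mem_insert_self a s, ?_⟩
      rw [this]; omega

theorem Finset.sum_eq_sum_lt_add_add_sum_gt {ι : Type*} [LinearOrder ι] (w : ι → ℕ)
    {S : Finset ι} {a : ι} (ha : a ∈ S) :
    ∑ i ∈ S, w i = ∑ i ∈ S with i < a, w i + w a + ∑ i ∈ S with a < i, w i := by
  rw [← Finset.sum_filter_add_sum_filter_not S (· < a), add_assoc]
  congr 1
  have : S.filter (fun i => ¬ i < a) = insert a (S.filter (a < ·)) := by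
    ext i; simp only [Finset.mem_filter, Finset.mem_insert, not_lt]
    constructor
    · rintro ⟨hi, hle⟩; rcases hle.eq_or_lt with h | h
      · exact Or.inl h.symm
      · exact Or.inr ⟨hi, h⟩
    · rintro (rfl | ⟨hi, h⟩)
      · exact ⟨ha, le_rfl⟩
      · exact ⟨hi, h.le⟩
  rw [this, Finset.sum_insert (by simp)]

/-- Splitting at the element where the cumulative weight crosses `2 ^ m`, the pivot gets `ε`
and the two sides, each of weight at most `2 ^ m`, are coded recursively behind `0` and `1`. -/
theorem exists_alphabetic_code {ι : Type*} [LinearOrder ι] (w : ι → ℕ) (m : ℕ) (S : Finset ι)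
    (hpos : ∀ i ∈ S, 1 ≤ w i) (hsum : ∑ i ∈ S, w i ≤ 2 ^ m) :
    ∃ f : ι → List Bool, (∀ i ∈ S, ∀ j ∈ S, i < j → bslt (f i) (f j)) ∧
      ∀ i ∈ S, (f i).length + Nat.clog 2 (w i) ≤ m := by
  induction m generalizing S with
  | zero =>
    have hcard : S.card ≤ 1 := by
      simpa using (Finset.card_nsmul_le_sum S w 1 hpos).trans hsum
    refine ⟨fun _ => [], fun i hi j hj hij => ?_, fun i hi => ?_⟩
    · exact absurd (Finset.card_le_one.1 hcard i hi j hj) hij.ne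
    · simpa using Nat.clog_le_of_le_pow
        ((Finset.single_le_sum (fun _ _ => Nat.zero_le _) hi).trans hsum)
  | succ m ih =>
    by_cases hsmall : ∑ i ∈ S, w i ≤ 2 ^ m
    · obtain ⟨f, hord, hlen⟩ := ih S hpos hsmall
      exact ⟨f, hord, fun i hi => (hlen i hi).trans m.le_succ⟩
    rw [not_le] at hsmall
    obtain ⟨a, haS, hleft, hmid⟩ := Finset.exists_pivot_of_lt_sum w _ S hsmall
    have hsplit := Finset.sum_eq_sum_lt_add_add_sum_gt w haS
    rw [pow_succ] at hsum
    obtain ⟨fL, hordL, hlenL⟩ :=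
      ih (S.filter (· < a)) (fun i hi => hpos i (Finset.mem_filter.1 hi).1) hleft
    obtain ⟨fR, hordR, hlenR⟩ :=
      ih (S.filter (a < ·)) (fun i hi => hpos i (Finset.mem_filter.1 hi).1) (by omega)
    refine ⟨fun i => if i < a then false :: fL i else if a < i then true :: fR i else [], ?_, ?_⟩
    · intro i hi j hj hij
      simp only
      split_ifs <;>
        simp_all only [Finset.mem_filter, and_imp, not_lt, bslt, Bool.true_eq_false,
          Bool.false_eq_true, and_self, and_true, and_false, false_and, or_true, or_false,
          or_self] <;>
        order
    · intro i hi
      have hwa : Nat.clog 2 (w a) ≤ m + 1 := Nat.clog_le_of_le_pow (by rw [pow_succ]; omega)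
      simp only
      split_ifs with h1 h2
      · have := hlenL i (by simp [hi, h1]); simp only [List.length_cons]; omega
      · have := hlenR i (by simp [hi, h2]); simp only [List.length_cons]; omega
      · obtain rfl : i = a := le_antisymm (not_lt.1 h2) (not_lt.1 h1)
        simpa using hwa

section Words

variable {D : Type*} [DecidableEq D]

def extCount (L : Finset (List D)) (p : List D) : ℕ :=
  (L.filter (p <+: ·)).card

noncomputable def nextSymbols (L : Finset (List D)) (p : List D) : Finset D :=
  (L.biUnion fun q => q.inits.toFinset).preimage (p ++ [·])
    ((List.append_right_injective p).comp List.singleton_injective).injOn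

theorem mem_nextSymbols {L : Finset (List D)} {p : List D} {d : D} :
    d ∈ nextSymbols L p ↔ ∃ q ∈ L, p ++ [d] <+: q := by
  rw [nextSymbols, Finset.mem_preimage]
  simp only [Finset.mem_biUnion, List.mem_toFinset, List.mem_inits]

theorem extCount_pos_of_mem_nextSymbols {L : Finset (List D)} {p : List D} {d : D}
    (hd : d ∈ nextSymbols L p) : 1 ≤ extCount L (p ++ [d]) := by
  obtain ⟨q, hq, hpq⟩ := mem_nextSymbols.1 hd
  exact Finset.card_pos.2 ⟨q, Finset.mem_filter.2 ⟨hq, hpq⟩⟩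

theorem sum_extCount_append_singleton_le (L : Finset (List D)) (p : List D) (C : Finset D) :
    ∑ d ∈ C, extCount L (p ++ [d]) ≤ extCount L p := by
  have hdisj : (C : Set D).PairwiseDisjoint fun d => L.filter (p ++ [d] <+: ·) := by
    intro d _ d' _ hne
    refine Finset.disjoint_left.2 fun q hq hq' => hne ?_
    have h := List.prefix_of_prefix_length_le (Finset.mem_filter.1 hq).2
      (Finset.mem_filter.1 hq').2 (by simp)
    simpa using h.eq_of_length (by simp)
  simp only [extCount, ← Finset.card_biUnion hdisj]
  refine Finset.card_le_card fun q hq => ?_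
  obtain ⟨d, _, hd⟩ := Finset.mem_biUnion.1 hq
  rw [Finset.mem_filter] at hd ⊢
  exact ⟨hd.1, (p.prefix_append [d]).trans hd.2⟩

theorem extCount_nil (L : Finset (List D)) : extCount L [] = L.card := by
  rw [extCount, Finset.filter_true_of_mem fun q _ => List.nil_prefix]

theorem pathBits_add_clog_extCount_le (L : Finset (List D)) (c : List D → D → List Bool)
    (hc : ∀ p, ∀ d ∈ nextSymbols L p,
      (c p d).length + Nat.clog 2 (extCount L (p ++ [d])) ≤ Nat.clog 2 (extCount L p))
    (q r : List D) (hq : ∃ l ∈ L, r ++ q <+: l) :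
    pathBits (fun s => c (r ++ s)) q + Nat.clog 2 (extCount L (r ++ q)) ≤
      Nat.clog 2 (extCount L r) := by
  induction q generalizing r with
  | nil => simp [pathBits]
  | cons d q ih =>
    obtain ⟨l, hl, hrl⟩ := hq
    have hd : d ∈ nextSymbols L r :=
      mem_nextSymbols.2 ⟨l, hl, (List.prefix_append (r ++ [d]) q).trans (by simpa using hrl)⟩
    have hstep := hc r d hd
    have hrest := ih (r ++ [d]) ⟨l, hl, by simpa using hrl⟩
    simp only [pathBits, List.append_nil, List.append_assoc, List.singleton_append] at hrest ⊢
    linarith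

theorem pathBits_le_clog_card (L : Finset (List D)) (c : List D → D → List Bool)
    (hc : ∀ p, ∀ d ∈ nextSymbols L p,
      (c p d).length + Nat.clog 2 (extCount L (p ++ [d])) ≤ Nat.clog 2 (extCount L p))
    {q : List D} (hq : q ∈ L) : pathBits c q ≤ Nat.clog 2 L.card := by
  have := pathBits_add_clog_extCount_le L c hc q [] ⟨q, hq, List.prefix_refl q⟩
  simp only [List.nil_append, extCount_nil] at this
  linarith

end Words

theorem exists_mem_leaves_prefix {D : Type*} {T : Finset (List D)} {p : List D} (hp : p ∈ T) :
    ∃ q ∈ leaves T, p <+: q := by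
  classical
  obtain ⟨q, hq, hmax⟩ := (T.filter (p <+: ·)).exists_max_image List.length ⟨p, by simp [hp]⟩
  rw [Finset.mem_filter] at hq
  refine ⟨q, ?_, hq.2⟩
  rw [leaves, Finset.mem_filter]
  refine ⟨hq.1, fun d hd => ?_⟩
  have := hmax (q ++ [d]) (Finset.mem_filter.2 ⟨hd, hq.2.trans (List.prefix_append q [d])⟩)
  simp at this

theorem succinct_tree_coding_general {D : Type*} [LinearOrder D] (ℓ : ℕ)
    (T : Finset (List D))
    (hleaves : (leaves T).card ≤ ℓ) :
    ∃ c : List D → D → List Bool,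
      (∀ p ∈ T, ∀ d d' : D, p ++ [d] ∈ T → p ++ [d'] ∈ T →
        (d < d' ↔ bslt (c p d) (c p d'))) ∧
      (∀ p ∈ leaves T, pathBits c p ≤ Nat.clog 2 ℓ) := by
  set L := leaves T
  choose c hord hlen using fun p => exists_alphabetic_code (fun d => extCount L (p ++ [d])) _
    (nextSymbols L p) (fun d hd => extCount_pos_of_mem_nextSymbols hd)
    ((sum_extCount_append_singleton_le L p _).trans (Nat.le_pow_clog one_lt_two _))
  have hchild {p : List D} {d : D} (hd : p ++ [d] ∈ T) : d ∈ nextSymbols L p :=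
    mem_nextSymbols.2 (exists_mem_leaves_prefix hd)
  refine ⟨c, fun p _ d d' hd hd' => ?_, fun p hp => ?_⟩
  · exact lt_iff_bslt_of_forall_lt (hord p d (hchild hd) d' (hchild hd'))
      (hord p d' (hchild hd') d (hchild hd))
  · exact (pathBits_le_clog_card L c hlen hp).trans (Nat.clog_mono_right 2 hleaves)

/-- **Succinct tree coding.** For every ordered tree of height `h` with at most `ℓ ≥ 1`
leaves there is an adaptive order-preserving relabelling of branching directions by
finite binary strings (so the recoded tree is isomorphic as an ordered tree to the
original one), such that every navigation path to a leaf uses at most `⌈lg ℓ⌉` bits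
in total. -/
theorem succinct_tree_coding {D : Type*} [LinearOrder D] (h ℓ : ℕ) (hℓ : 1 ≤ ℓ)
    (T : Finset (List D)) (hroot : ([] : List D) ∈ T)
    (hpref : ∀ p ∈ T, ∀ q : List D, q <+: p → q ∈ T)
    (hheight : ∀ p ∈ T, p.length ≤ h)
    (hleaves : (leaves T).card ≤ ℓ) :
    ∃ c : List D → D → List Bool,
      (∀ p ∈ T, ∀ d d' : D, p ++ [d] ∈ T → p ++ [d'] ∈ T →
        (d < d' ↔ bslt (c p d) (c p d'))) ∧
      (∀ p ∈ leaves T, pathBits c p ≤ Nat.clog 2 ℓ) :=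
  succinct_tree_coding_general ℓ T hleaves
end

section
/- If 0 < p < 1 and pk is a positive integer with pk < k, then 2^{k·H(p)} / √(8·p·(1−p)·k) ≤ C(k, pk) ≤ 2^{k·H(p)} / √(2π·p·(1−p)·k), where H(p) = −p·lg p − (1−p)·lg(1−p). -/
/-- The binary entropy function `H(p) = −p·lg p − (1−p)·lg(1−p)` (lg = log base 2). -/
noncomputable def binEnt (p : ℝ) : ℝ :=
  -(p * Real.logb 2 p) - (1 - p) * Real.logb 2 (1 - p)

/-!
Write `s n = n! / (√(2n) (n/e)^n)` for the Stirling sequence. For `k = m + b` one has exactly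
`C(k, m) = s k / (s m · s b) · 2^{k H(m/k)} / √(2mb/k)`, so the two bounds amount to
`1/2 ≤ s k / (s m · s b) ≤ 1/√π`. The upper one holds because `s` decreases to `√π`. The lower
one follows from Robbins' bound `s n ≤ √π e^{1/(12n)}` together with `e^{1/9} √π ≤ 2`, except
for `{m, b} = {1, 1}` (the equality case `C(2, 1) = 2`) and `{1, 2}`, which are computed directly.
-/

open Real Filter Topology Nat Stirling

theorem two_rpow_mul_binEnt {x y : ℝ} (hx : 0 < x) (hy : 0 < y) :
    (2 : ℝ) ^ ((x + y) * binEnt (x / (x + y))) = (x + y) ^ (x + y) / (x ^ x * y ^ y) := by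
  have hxy : 0 < x + y := by positivity
  have hcompl : 1 - x / (x + y) = y / (x + y) := by field_simp; ring
  rw [rpow_def_of_pos two_pos, rpow_def_of_pos hxy, rpow_def_of_pos hx, rpow_def_of_pos hy,
    ← exp_add, ← exp_sub, binEnt, hcompl, logb, logb, log_div hx.ne' hxy.ne',
    log_div hy.ne' hxy.ne']
  congr 1
  field_simp
  ring

namespace Stirling

theorem stirlingSeq_pos {n : ℕ} (hn : n ≠ 0) : 0 < stirlingSeq n :=
  (sqrt_pos.2 pi_pos).trans_le (sqrt_pi_le_stirlingSeq hn)

theorem factorial_eq_stirlingSeq_mul {n : ℕ} (hn : n ≠ 0) :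
    (n ! : ℝ) = stirlingSeq n * (√(2 * n) * (n / exp 1) ^ n) := by
  rw [stirlingSeq, div_mul_cancel₀]
  positivity

theorem choose_add_eq_stirlingSeq {m b : ℕ} (hm : m ≠ 0) (hb : b ≠ 0) :
    ((m + b).choose m : ℝ) = stirlingSeq (m + b) / (stirlingSeq m * stirlingSeq b) *
      ((m + b : ℝ) ^ (m + b) / ((m : ℝ) ^ m * (b : ℝ) ^ b)) / √(2 * m * b / (m + b)) := by
  have hsqrt : √(2 * m * b / (m + b)) = √(2 * m) * √(2 * b) / √(2 * (m + b)) := by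
    rw [← sqrt_mul (by positivity), ← sqrt_div (by positivity)]
    congr 1
    field_simp
  have hsm := stirlingSeq_pos hm
  have hsb := stirlingSeq_pos hb
  rw [cast_add_choose, factorial_eq_stirlingSeq_mul hm, factorial_eq_stirlingSeq_mul hb,
    factorial_eq_stirlingSeq_mul (by omega)]
  push_cast
  rw [hsqrt, div_pow, div_pow, div_pow, pow_add (exp 1)]
  field_simp

/-- Robbins' bound: by `log_stirlingSeq_sdiff_le`, `log (s n) - 1/(12n)` increases to `log √π`. -/
theorem stirlingSeq_le_sqrt_pi_mul_exp {n : ℕ} (hn : n ≠ 0) :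
    stirlingSeq n ≤ √π * exp (1 / (12 * n)) := by
  set f : ℕ → ℝ := fun j ↦ log (stirlingSeq (j + 1)) - 1 / (12 * (j + 1 : ℕ))
  have hf_mono : Monotone f := by
    refine monotone_nat_of_le_succ fun j ↦ ?_
    have hstep := log_stirlingSeq_sdiff_le (j + 1)
    have htelescope : (1 : ℝ) / (12 * (j + 1 : ℕ) * ((j + 1 : ℕ) + 1)) =
        1 / (12 * (j + 1 : ℕ)) - 1 / (12 * (j + 1 + 1 : ℕ)) := by
      push_cast; field_simp; ring
    simp only [f]
    push_cast at hstep htelescope ⊢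
    linarith
  have hf_lim : Tendsto f atTop (𝓝 (log √π - 0)) :=
    ((continuousAt_log (by positivity)).tendsto.comp
      (tendsto_stirlingSeq_sqrt_pi.comp (tendsto_add_atTop_nat 1))).sub <| by
      simpa [div_eq_mul_inv, mul_comm] using
        tendsto_one_div_add_atTop_nhds_zero_nat.div_const (12 : ℝ)
  obtain ⟨j, rfl⟩ := exists_eq_succ_of_ne_zero hn
  have hlog := hf_mono.ge_of_tendsto hf_lim j
  rw [sub_zero, sub_le_iff_le_add] at hlog
  calc stirlingSeq (j + 1) = exp (log (stirlingSeq (j + 1))) :=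
        (exp_log (stirlingSeq'_pos j)).symm
    _ ≤ √π * exp (1 / (12 * (j + 1 : ℕ))) := by
      grw [hlog, exp_add, exp_log (by positivity)]

theorem sqrt_pi_mul_stirlingSeq_add_le {a b : ℕ} (ha : a ≠ 0) (hb : b ≠ 0) :
    √π * stirlingSeq (a + b) ≤ stirlingSeq a * stirlingSeq b := by
  obtain ⟨c, rfl⟩ := exists_eq_succ_of_ne_zero hb
  exact mul_le_mul (sqrt_pi_le_stirlingSeq ha) (stirlingSeq'_antitone (Nat.le_add_left c a))
    (stirlingSeq_pos (by omega)).le (stirlingSeq_pos ha).le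

theorem exp_one_div_nine_mul_sqrt_pi_le_two : exp (1 / 9) * √π ≤ 2 := by
  have hexp := exp_bound' (x := 2 / 9) (by norm_num) (by norm_num) (n := 3) (by norm_num)
  norm_num [Finset.sum_range_succ, Nat.factorial] at hexp
  have hsq : (exp (1 / 9) * √π) ^ 2 ≤ 2 ^ 2 := by
    rw [mul_pow, sq_sqrt pi_pos.le, ← exp_nat_mul]
    nlinarith [pi_lt_d2, pi_pos]
  exact (pow_le_pow_iff_left₀ (by positivity) (by norm_num) (by norm_num)).1 hsq

theorem stirlingSeq_mul_le_of_inv_add_inv_le {a b : ℕ} (ha : a ≠ 0) (hb : b ≠ 0)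
    (h : 1 / (12 * (a : ℝ)) + 1 / (12 * b) ≤ 1 / 9) :
    stirlingSeq a * stirlingSeq b ≤ 2 * stirlingSeq (a + b) :=
  calc stirlingSeq a * stirlingSeq b
      ≤ (√π * exp (1 / (12 * a))) * (√π * exp (1 / (12 * b))) :=
        mul_le_mul (stirlingSeq_le_sqrt_pi_mul_exp ha) (stirlingSeq_le_sqrt_pi_mul_exp hb)
          (stirlingSeq_pos hb).le (by positivity)
    _ = √π * (exp (1 / (12 * a) + 1 / (12 * b)) * √π) := by rw [exp_add]; ring
    _ ≤ √π * (exp (1 / 9) * √π) := by gcongr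
    _ ≤ √π * 2 := by grw [exp_one_div_nine_mul_sqrt_pi_le_two]
    _ ≤ 2 * stirlingSeq (a + b) := by
        rw [mul_comm]; grw [sqrt_pi_le_stirlingSeq (n := a + b) (by omega)]

theorem stirlingSeq_one_mul_stirlingSeq_one :
    stirlingSeq 1 * stirlingSeq 1 = 2 * stirlingSeq 2 := by
  norm_num [stirlingSeq, Nat.factorial]
  field_simp
  simp

theorem stirlingSeq_one_mul_stirlingSeq_two_le :
    stirlingSeq 1 * stirlingSeq 2 ≤ 2 * stirlingSeq 3 := by
  norm_num [stirlingSeq, Nat.factorial]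
  field_simp
  have h3 : √3 ≤ 16 / 9 := sqrt_le_iff.2 ⟨by norm_num, by norm_num⟩
  rw [show (6 : ℝ) = 2 * 3 by norm_num, sqrt_mul zero_le_two]
  nlinarith [sqrt_nonneg 2]

theorem stirlingSeq_mul_le_two_mul_stirlingSeq_add {a b : ℕ} (ha : a ≠ 0) (hb : b ≠ 0) :
    stirlingSeq a * stirlingSeq b ≤ 2 * stirlingSeq (a + b) := by
  wlog hab : a ≤ b generalizing a b
  · rw [mul_comm, add_comm]
    exact this hb ha (by omega)
  by_cases hsmall : a = 1 ∧ b ≤ 2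
  · obtain ⟨rfl, hb2⟩ := hsmall
    interval_cases b
    · exact stirlingSeq_one_mul_stirlingSeq_one.le
    · exact stirlingSeq_one_mul_stirlingSeq_two_le
  refine stirlingSeq_mul_le_of_inv_add_inv_le ha hb ?_
  rcases Nat.lt_or_ge a 2 with ha2 | ha2
  · have hb3 : (3 : ℝ) ≤ b := by norm_cast; omega
    obtain rfl : a = 1 := by omega
    calc 1 / (12 * ((1 : ℕ) : ℝ)) + 1 / (12 * b) ≤ 1 / (12 * 1) + 1 / (12 * 3) := by
          push_cast; gcongr
      _ = 1 / 9 := by norm_num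
  · have ha2' : (2 : ℝ) ≤ a := by exact_mod_cast ha2
    have hb2 : (2 : ℝ) ≤ b := by norm_cast; omega
    calc 1 / (12 * (a : ℝ)) + 1 / (12 * b) ≤ 1 / (12 * 2) + 1 / (12 * 2) := by gcongr
      _ ≤ 1 / 9 := by norm_num

theorem choose_add_bounds {m b : ℕ} (hm : m ≠ 0) (hb : b ≠ 0) :
    (m + b : ℝ) ^ (m + b) / ((m : ℝ) ^ m * (b : ℝ) ^ b) / (2 * √(2 * m * b / (m + b))) ≤
        ((m + b).choose m : ℝ) ∧
      ((m + b).choose m : ℝ) ≤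
        (m + b : ℝ) ^ (m + b) / ((m : ℝ) ^ m * (b : ℝ) ^ b) /
          (√π * √(2 * m * b / (m + b))) := by
  rw [choose_add_eq_stirlingSeq hm hb]
  set R := stirlingSeq (m + b) / (stirlingSeq m * stirlingSeq b)
  set X := (m + b : ℝ) ^ (m + b) / ((m : ℝ) ^ m * (b : ℝ) ^ b) / √(2 * m * b / (m + b))
  have hprod := mul_pos (stirlingSeq_pos hm) (stirlingSeq_pos hb)
  have hR_lower : 1 / 2 ≤ R := by
    rw [div_le_div_iff₀ two_pos hprod]
    linarith [stirlingSeq_mul_le_two_mul_stirlingSeq_add hm hb]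
  have hR_upper : R ≤ 1 / √π := by
    rw [div_le_div_iff₀ hprod (by positivity)]
    linarith [sqrt_pi_mul_stirlingSeq_add_le hm hb]
  have hX : 0 ≤ X := by positivity
  constructor
  · calc _ = 1 / 2 * X := by ring
      _ ≤ R * X := by gcongr
      _ = _ := by ring
  · calc _ = R * X := by ring
      _ ≤ 1 / √π * X := by gcongr
      _ = _ := by ring

end Stirling

/-- **Ash's Lemma 4.7.1.** If `0 < p < 1` and `pk` is a positive integer `m` (with
`m < k` automatic), then
`2^{k·H(p)} / √(8·p·(1−p)·k) ≤ C(k, m) ≤ 2^{k·H(p)} / √(2π·p·(1−p)·k)`. -/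
theorem ash_binomial_estimate (k m : ℕ) (p : ℝ) (hp0 : 0 < p) (hp1 : p < 1)
    (hk : 0 < k) (hm : (m : ℝ) = p * k) :
    (2 : ℝ) ^ ((k : ℝ) * binEnt p) / Real.sqrt (8 * p * (1 - p) * k)
        ≤ (Nat.choose k m : ℝ) ∧
    (Nat.choose k m : ℝ)
        ≤ (2 : ℝ) ^ ((k : ℝ) * binEnt p) / Real.sqrt (2 * Real.pi * p * (1 - p) * k) := by
  have hk' : (0 : ℝ) < k := by exact_mod_cast hk
  have hm0 : m ≠ 0 := by
    have : (0 : ℝ) < m := hm ▸ mul_pos hp0 hk'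
    exact_mod_cast this.ne'
  have hmk : m < k := by
    have : (m : ℝ) < k := hm ▸ (mul_lt_iff_lt_one_left hk').2 hp1
    exact_mod_cast this
  obtain ⟨b, rfl⟩ := Nat.exists_eq_add_of_le hmk.le
  have hb0 : b ≠ 0 := by omega
  obtain rfl : p = m / (m + b : ℕ) := by rw [hm]; field_simp
  push_cast
  have hentropy : (2 : ℝ) ^ ((m + b : ℝ) * binEnt (m / (m + b))) =
      (m + b : ℝ) ^ (m + b) / ((m : ℝ) ^ m * (b : ℝ) ^ b) := by
    rw [two_rpow_mul_binEnt (by positivity) (by positivity)]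
    norm_cast
  have h8 : 8 * (m / (m + b : ℝ)) * (1 - m / (m + b)) * (m + b) =
      2 ^ 2 * (2 * m * b / (m + b)) := by
    field_simp; ring
  have hπ : 2 * π * (m / (m + b : ℝ)) * (1 - m / (m + b)) * (m + b) =
      π * (2 * m * b / (m + b)) := by
    field_simp; ring
  rw [hentropy, h8, hπ, sqrt_mul (by norm_num), sqrt_sq (by norm_num), sqrt_mul pi_pos.le]
  exact choose_add_bounds hm0 hb0
end

section
/- In a parity game, if μ is a mapping from vertices to tuples of non-negative integers (or to bounded adaptive multi-counters) such that every edge on a simple cycle v₁, v₂, …, v_k is progressive in μ, then the highest vertex priority occurring on that cycle is even. -/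
/-!
Let `p` be the highest priority on the cycle and compare the vertices by the lexicographic order
of their `p`-truncations. Truncating at `p` keeps fewer components than truncating at any priority
on the cycle, and truncation preserves the weak lexicographic order, so every progressive edge of
the cycle is weakly decreasing in this comparison. If `p` were odd, the edge leaving a vertex of
priority `p` would be strictly decreasing, and going once around the cycle would give `t < t`.
-/

/-- The `p`-truncation of a tuple of non-negative integers indexed by the odd
priorities `d−1, d−3, …, 1` (in decreasing order): keep only the components for
odd priorities `≥ p`, i.e. the first `(d + 1 − p)/2` components. -/
def trunc (d p : ℕ) (t : List ℕ) : List ℕ := t.take ((d + 1 - p) / 2)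

/-- Strict lexicographic order on tuples, in which a proper prefix is strictly smaller. -/
def nlex : List ℕ → List ℕ → Prop := List.Lex (· < ·)

/-- An edge `(v, u)` is progressive in `μ` if `μ(v)|_{π(v)} ≥ μ(u)|_{π(v)}`,
with strict inequality when `π(v)` is odd. -/
def Progressive {V : Type*} (d : ℕ) (π : V → ℕ) (μ : V → List ℕ) (v u : V) : Prop :=
  (trunc d (π v) (μ u) = trunc d (π v) (μ v) ∨
    nlex (trunc d (π v) (μ u)) (trunc d (π v) (μ v))) ∧
  (Odd (π v) → nlex (trunc d (π v) (μ u)) (trunc d (π v) (μ v)))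

theorem List.Lex.take {α : Type*} {r : α → α → Prop} {a b : List α} (h : List.Lex r a b)
    (n : ℕ) : a.take n = b.take n ∨ List.Lex r (a.take n) (b.take n) := by
  induction h generalizing n with
  | nil => cases n <;> simp
  | cons _ ih =>
    cases n with
    | zero => simp
    | succ n => simpa using (ih n).imp_right List.Lex.cons
  | rel h => cases n <;> simp [List.Lex.rel h]

theorem List.monotone_take {α : Type*} [LinearOrder α] (n : ℕ) :
    Monotone (List.take n : List α → List α) := by
  intro a b hab
  rcases hab.eq_or_lt with rfl | hlt
  · exact le_rfl
  · exact le_iff_eq_or_lt.mpr (List.Lex.take hlt n)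

theorem trunc_trunc_of_le {d p q : ℕ} (hqp : q ≤ p) (t : List ℕ) :
    trunc d p (trunc d q t) = trunc d p t := by
  have hlen : (d + 1 - p) / 2 ≤ (d + 1 - q) / 2 := by omega
  simp only [trunc, List.take_take, Nat.min_eq_left hlen]

theorem Progressive.trunc_le {V : Type*} {d p : ℕ} {π : V → ℕ} {μ : V → List ℕ} {v u : V}
    (h : Progressive d π μ v u) (hvp : π v ≤ p) : trunc d p (μ u) ≤ trunc d p (μ v) := by
  -- `nlex` is definitionally `<` of Mathlib's lexicographic linear order on `List ℕ`.
  have hle : trunc d (π v) (μ u) ≤ trunc d (π v) (μ v) := le_iff_eq_or_lt.mpr h.1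
  rw [← trunc_trunc_of_le hvp (μ u), ← trunc_trunc_of_le hvp (μ v)]
  exact List.monotone_take _ hle

/-- Reading the cycle as the `k`-periodic sequence `n ↦ f (n % k)`, weakly decreasing steps make
it antitone, so after one full turn each step is reversed. -/
theorem not_lt_of_cycle_le {α : Type*} [Preorder α] {k : ℕ} (hk : 0 < k) (f : ℕ → α)
    (hstep : ∀ i < k, f ((i + 1) % k) ≤ f i) {i : ℕ} (hi : i < k) :
    ¬ f ((i + 1) % k) < f i := by
  have hanti : Antitone fun n => f (n % k) := antitone_nat_of_succ_le fun n => by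
    simpa only [Nat.mod_add_mod] using hstep (n % k) (Nat.mod_lt n hk)
  have hturn : f ((i + k) % k) ≤ f ((i + 1) % k) := hanti (by omega)
  rw [Nat.add_mod_right, Nat.mod_eq_of_lt hi] at hturn
  exact not_lt_of_ge hturn

theorem progressive_cycle_even_general {V : Type*} (d : ℕ) (π : V → ℕ) (μ : V → List ℕ)
    (k : ℕ) (hk : 0 < k) (c : ℕ → V)
    (hprog : ∀ i < k, Progressive d π μ (c i) (c ((i + 1) % k))) :
    Even ((Finset.range k).sup fun i => π (c i)) := by
  obtain ⟨i₀, hi₀, hp⟩ := Finset.exists_mem_eq_sup (Finset.range k)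
    ⟨0, Finset.mem_range.mpr hk⟩ fun i => π (c i)
  rw [Finset.mem_range] at hi₀
  have hmax : ∀ i < k, π (c i) ≤ π (c i₀) := fun i hi =>
    hp ▸ Finset.le_sup (f := fun i => π (c i)) (Finset.mem_range.mpr hi)
  rw [hp, ← Nat.not_odd_iff_even]
  intro hodd
  exact not_lt_of_cycle_le hk (fun i => trunc d (π (c i₀)) (μ (c i)))
    (fun i hi => (hprog i hi).trunc_le (hmax i hi)) hi₀ ((hprog i₀ hi₀).2 hodd)

/-- If every edge on a simple cycle `c 0, c 1, …, c (k−1)` in a parity game graph is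
progressive in `μ`, then the highest vertex priority occurring on the cycle is even. -/
theorem progressive_cycle_even {V : Type*} (d : ℕ) (π : V → ℕ) (E : V → V → Prop)
    (μ : V → List ℕ) (hπ : ∀ v, 1 ≤ π v ∧ π v ≤ d)
    (k : ℕ) (hk : 0 < k) (c : ℕ → V) (hinj : Set.InjOn c (Set.Iio k))
    (hE : ∀ i < k, E (c i) (c ((i + 1) % k)))
    (hprog : ∀ i < k, Progressive d π μ (c i) (c ((i + 1) % k))) :
    Even ((Finset.range k).sup fun i => π (c i)) :=
  progressive_cycle_even_general d π μ k hk c hprog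
end

section
/- If a parity game admits a succinct progress measure μ, then the positional strategy for Even that follows only edges progressive in μ is winning for Even from every starting vertex. -/
/-- Strict lexicographic order on tuples of binary strings, in which a proper prefix
is strictly smaller. -/
def blex : List (List Bool) → List (List Bool) → Prop := List.Lex bslt

/-- The `p`-truncation of a tuple indexed by the odd priorities `d−1, d−3, …`
(in decreasing order): keep the components for odd priorities `≥ p`. -/
def strunc (d p : ℕ) (t : List (List Bool)) : List (List Bool) := t.take ((d + 1 - p) / 2)

/-- Edge `(v, u)` is progressive in `μ`: `μ(v)|_{π(v)} ≥ μ(u)|_{π(v)}`,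
strictly when `π(v)` is odd. -/
def Prog {V : Type*} (d : ℕ) (π : V → ℕ) (μ : V → List (List Bool)) (v u : V) : Prop :=
  (strunc d (π v) (μ u) = strunc d (π v) (μ v) ∨
    blex (strunc d (π v) (μ u)) (strunc d (π v) (μ v))) ∧
  (Odd (π v) → blex (strunc d (π v) (μ u)) (strunc d (π v) (μ v)))

/-- A play `f` is winning for Even if the highest priority occurring infinitely
often is even. -/
def WinsEven {V : Type*} (π : V → ℕ) (f : ℕ → V) : Prop :=
  ∃ p, Even p ∧ (∃ N, ∀ n ≥ N, π (f n) ≤ p) ∧ (∀ N, ∃ n ≥ N, π (f n) = p)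

/-!
Along a play consistent with `σ` every edge is progressive. Let `p` be the highest priority
occurring infinitely often and suppose it is odd. From some point on all priorities are `≤ p`, so
the `p`-truncation of `μ` along the play never increases, and it strictly decreases at every
visit to a vertex of priority `p`. A strict order admits no such sequence with finitely many
values, and `μ` takes finitely many values because the game is finite.
-/

open Filter Function

theorem bslt_irrefl (s : List Bool) : ¬ bslt s s := by
  induction s <;> simp_all [bslt]

theorem bslt_trans {s t u : List Bool} (hst : bslt s t) (htu : bslt t u) : bslt s u := by
  induction s generalizing t u <;> cases t <;> cases u <;> simp only [bslt] at * <;> grind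

instance : IsStrictOrder (List (List Bool)) blex where
  irrefl := List.lex_irrefl bslt_irrefl
  trans _ _ _ := List.lex_trans bslt_trans

theorem List.Lex.take_eq_or_lex {α : Type*} {r : α → α → Prop} {l₁ l₂ : List α}
    (h : List.Lex r l₁ l₂) (k : ℕ) :
    l₁.take k = l₂.take k ∨ List.Lex r (l₁.take k) (l₂.take k) := by
  induction h generalizing k with
  | nil => cases k <;> simp
  | rel hr => cases k <;> simp [List.Lex.rel hr]
  | cons _ ih =>
    cases k with
    | zero => simp
    | succ k => exact (ih k).imp (by simp [·]) List.Lex.cons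

theorem strunc_eq_take_strunc {d p q : ℕ} (hqp : q ≤ p) (t : List (List Bool)) :
    strunc d p t = (strunc d q t).take ((d + 1 - p) / 2) := by
  have : (d + 1 - p) / 2 ≤ (d + 1 - q) / 2 := Nat.div_le_div_right (by omega)
  simp only [strunc, List.take_take, min_eq_left this]

theorem Prog.strunc_eq_or_blex {V : Type*} {d : ℕ} {π : V → ℕ} {μ : V → List (List Bool)}
    {v u : V} (h : Prog d π μ v u) {p : ℕ} (hp : π v ≤ p) :
    strunc d p (μ u) = strunc d p (μ v) ∨ blex (strunc d p (μ u)) (strunc d p (μ v)) := by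
  rw [strunc_eq_take_strunc hp (μ u), strunc_eq_take_strunc hp (μ v)]
  rcases h.1 with h | h
  · exact Or.inl (congrArg _ h)
  · exact List.Lex.take_eq_or_lex h _

theorem exists_eventually_le_frequently_eq {α : Type*} [LinearOrder α] {x : ℕ → α}
    (hx : (Set.range x).Finite) :
    ∃ p, (∀ᶠ n in atTop, x n ≤ p) ∧ ∃ᶠ n in atTop, x n = p := by
  set S := {q | ∃ᶠ n in atTop, x n = q}
  have hS : ∀ᶠ n in atTop, x n ∈ S := by
    have : ∀ q ∈ Set.range x \ S, ∀ᶠ n in atTop, x n ≠ q := fun q hq => not_frequently.1 hq.2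
    filter_upwards [(eventually_all_finite (hx.sdiff (t := S))).2 this] with n hn
    by_contra h
    exact hn (x n) ⟨⟨n, rfl⟩, h⟩ rfl
  have hSfin : S.Finite := hx.subset fun q hq => by
    obtain ⟨n, rfl⟩ := hq.exists
    exact ⟨n, rfl⟩
  obtain ⟨p, hpS, hmax⟩ := S.exists_max_image id hSfin
    (by obtain ⟨n, hn⟩ := hS.exists; exact ⟨x n, hn⟩)
  exact ⟨p, hS.mono fun n hn => hmax _ hn, hpS⟩

theorem not_frequently_rel_of_eventually_eq_or_rel {α : Type*} {r : α → α → Prop}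
    [IsStrictOrder α r] {x : ℕ → α} (hx : (Set.range x).Finite)
    (hle : ∀ᶠ n in atTop, x (n + 1) = x n ∨ r (x (n + 1)) (x n)) :
    ¬ ∃ᶠ n in atTop, r (x (n + 1)) (x n) := by
  obtain ⟨N, hN⟩ := eventually_atTop.1 hle
  have hwf : WellFounded (r on x) := Set.wellFoundedOn_range.1 hx.wellFoundedOn
  obtain ⟨m, hNm : N ≤ m, hmin⟩ := hwf.has_min {n | N ≤ n} ⟨N, le_refl N⟩
  have hconst : ∀ k ≥ m, x k = x m := by
    intro k hk
    induction k, hk using Nat.le_induction with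
    | base => rfl
    | succ k hk ih =>
      rcases hN k (hNm.trans hk) with h | h
      · exact h.trans ih
      · exact absurd (ih ▸ h : r (x (k + 1)) (x m)) (hmin (k + 1) (show N ≤ k + 1 by omega))
  intro hfreq
  obtain ⟨k, hk, hr⟩ := frequently_atTop.1 hfreq m
  exact hmin (k + 1) (show N ≤ k + 1 by omega) (hconst k hk ▸ hr : r (x (k + 1)) (x m))

theorem sufficiency_general {V : Type*} [Fintype V] (d : ℕ) (E : V → V → Prop)
    (owner : V → Bool) (π : V → ℕ)
    (μ : V → List (List Bool))
    (hpmOdd : ∀ v, owner v = false → ∀ u, E v u → Prog d π μ v u)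
    (σ : V → V) (hσ : ∀ v, owner v = true → E v (σ v) ∧ Prog d π μ v (σ v))
    (f : ℕ → V)
    (hplay : ∀ n, (owner (f n) = true → f (n + 1) = σ (f n)) ∧
      (owner (f n) = false → E (f n) (f (n + 1)))) :
    WinsEven π f := by
  have hprog : ∀ n, Prog d π μ (f n) (f (n + 1)) := fun n => by
    cases h : owner (f n)
    · exact hpmOdd _ h _ ((hplay n).2 h)
    · exact (hplay n).1 h ▸ (hσ _ h).2
  obtain ⟨p, hle, hfreq⟩ := exists_eventually_le_frequently_eq
    ((Set.finite_range π).subset (Set.range_comp_subset_range f π))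
  refine ⟨p, Nat.not_odd_iff_even.1 fun hodd => ?_, eventually_atTop.1 hle,
    frequently_atTop.1 hfreq⟩
  refine not_frequently_rel_of_eventually_eq_or_rel (r := blex)
    (x := (fun v => strunc d p (μ v)) ∘ f)
    ((Set.finite_range fun v => strunc d p (μ v)).subset (Set.range_comp_subset_range f _))
    (hle.mono fun n hn => (hprog n).strunc_eq_or_blex hn) (hfreq.mono fun n hn => ?_)
  rw [comp_apply] at hn
  simpa only [comp_apply, hn] using (hprog n).2 (hn ▸ hodd)

/-- **Sufficiency.** If a parity game (with owner `v ↦ true` meaning Even owns `v`)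
admits a succinct progress measure `μ`, then the positional strategy `σ` for Even
that follows only edges progressive in `μ` is winning for Even from every starting
vertex: every play consistent with `σ` is won by Even. -/
theorem sufficiency {V : Type*} [Fintype V] (d : ℕ) (E : V → V → Prop)
    (owner : V → Bool) (π : V → ℕ) (hπ : ∀ v, 1 ≤ π v ∧ π v ≤ d)
    (μ : V → List (List Bool))
    (hsucc : ∀ v, (μ v).length ≤ d / 2 ∧
      ((μ v).map List.length).sum ≤ Nat.clog 2 (Nat.card {v : V // Odd (π v)}))
    (hpmEven : ∀ v, owner v = true → ∃ u, E v u ∧ Prog d π μ v u)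
    (hpmOdd : ∀ v, owner v = false → ∀ u, E v u → Prog d π μ v u)
    (σ : V → V) (hσ : ∀ v, owner v = true → E v (σ v) ∧ Prog d π μ v (σ v))
    (f : ℕ → V)
    (hplay : ∀ n, (owner (f n) = true → f (n + 1) = σ (f n)) ∧
      (owner (f n) = false → E (f n) (f (n + 1)))) :
    WinsEven π f :=
  sufficiency_general d E owner π μ hpmOdd σ hσ f hplay
end

section
/- Let L be a finite complete lattice and F a finite family of inflationary monotone operators on L. Then from any starting element μ ∈ L, every maximal sequence obtained by repeatedly applying operators from F that strictly increase the current element terminates, and it terminates at the least simultaneous fixed point of all operators in F that is greater than or equal to μ. -/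
/-! A strictly increasing sequence in a finite lattice cannot be infinite. Along any sequence of
applications of the operators starting at `μ`, induction and monotonicity keep every term below
each common fixed point above `μ`; a terminal element is itself a common fixed point, since an
inflationary operator that does not strictly increase an element fixes it. -/

lemma le_of_forall_lt_le_succ {α : Type*} [Preorder α] {x : ℕ → α} {n : ℕ}
    (h : ∀ k < n, x k ≤ x (k + 1)) : x 0 ≤ x n := by
  induction n with
  | zero => exact le_rfl
  | succ n ih => exact (ih fun k hk => h k (by omega)).trans (h n n.lt_succ_self)

lemma apply_chain_le_of_apply_le {L ι : Type*} [Preorder L] {f : ι → L → L}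
    (hmono : ∀ i, Monotone (f i)) {y : L} (hy : ∀ i, f i y ≤ y) {x : ℕ → L} {n : ℕ}
    (h0 : x 0 ≤ y) (h : ∀ k < n, ∃ i, x (k + 1) = f i (x k)) : x n ≤ y := by
  induction n with
  | zero => exact h0
  | succ n ih =>
    obtain ⟨i, hi⟩ := h n n.lt_succ_self
    rw [hi]
    exact (hmono i (ih fun k hk => h k (by omega))).trans (hy i)

theorem lifting_fixed_point_general {L : Type*} [Fintype L] [CompleteLattice L]
    {ι : Type*} (f : ι → L → L)
    (hinfl : ∀ i x, x ≤ f i x) (hmono : ∀ i, Monotone (f i)) (μ : L) :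
    (¬ ∃ x : ℕ → L, x 0 = μ ∧ ∀ k, ∃ i, x (k + 1) = f i (x k) ∧ x k < x (k + 1)) ∧
    (∀ (n : ℕ) (x : ℕ → L), x 0 = μ →
      (∀ k < n, ∃ i, x (k + 1) = f i (x k) ∧ x k < x (k + 1)) →
      (∀ i, ¬ x n < f i (x n)) →
      IsLeast {y | μ ≤ y ∧ ∀ i, f i y = y} (x n)) := by
  refine ⟨fun ⟨x, _, hstep⟩ => ?_, fun n x hx0 hstep hmax => ⟨⟨?_, ?_⟩, ?_⟩⟩
  · exact not_strictMono_of_wellFoundedGT x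
      (strictMono_nat_of_lt_succ fun k => (hstep k).choose_spec.2)
  · exact hx0 ▸ le_of_forall_lt_le_succ fun k hk => (hstep k hk).choose_spec.2.le
  · exact fun i => ((hinfl i _).eq_of_not_lt (hmax i)).symm
  · rintro y ⟨hμy, hy⟩
    exact apply_chain_le_of_apply_le hmono (fun i => (hy i).le) (hx0 ▸ hμy)
      fun k hk => (hstep k hk).imp fun _ => And.left

/-- In a finite complete lattice `L`, given a finite family `f : ι → L → L` of
inflationary monotone operators and a starting element `μ`:
(1) there is no infinite sequence of strictly increasing applications of operators
from the family starting at `μ` (so every maximal sequence terminates), and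
(2) every maximal sequence (one that ends at an element no operator strictly
increases) terminates at the least simultaneous fixed point of the family that is
greater than or equal to `μ`. -/
theorem lifting_fixed_point {L : Type*} [Fintype L] [CompleteLattice L]
    {ι : Type*} [Finite ι] (f : ι → L → L)
    (hinfl : ∀ i x, x ≤ f i x) (hmono : ∀ i, Monotone (f i)) (μ : L) :
    (¬ ∃ x : ℕ → L, x 0 = μ ∧ ∀ k, ∃ i, x (k + 1) = f i (x k) ∧ x k < x (k + 1)) ∧
    (∀ (n : ℕ) (x : ℕ → L), x 0 = μ →
      (∀ k < n, ∃ i, x (k + 1) = f i (x k) ∧ x k < x (k + 1)) →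
      (∀ i, ¬ x n < f i (x n)) →
      IsLeast {y | μ ≤ y ∧ ∀ i, f i y = y} (x n)) :=
  lifting_fixed_point_general f hinfl hmono μ
end

section
/- The pointwise order on the set of all functions from a finite set V to a finite linear order S (with a top element) forms a complete lattice, and for each v ∈ V the lifting operator Lift_v — which changes only the value at v, replacing it by the min (if Even owns v) or max (if Odd owns v) over outgoing edges (v,w) of lift(μ,v,w), where lift(μ,v,w) is the least σ ≥ μ(v) making edge (v,w) progressive in μ[v↦σ] — is inflationary and monotone. -/
/-!
Raising the other values of `μ` can only make an edge `(v, w)` harder to render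
progressive (the `⊤`-exception survives since truncation sends only `⊤` to `⊤`), so every `σ` admissible for `lift(ν, v, w)` with `μ ≤ ν` is admissible for
`lift(μ, v, w)`; hence `lift` is monotone in `μ`, and so are the min and the max over the
edges leaving `v`. Inflation holds because every candidate `σ` satisfies `μ v ≤ σ`. The
pointwise order on `V → S` is complete because `S` is a finite bounded linear order.
-/

/-- Progressivity of a pair of values w.r.t. priority `p`, in a linearly ordered set
of values `S` with top element `⊤` and truncation operations `trunc p`:
`σ|_p ≥ τ|_p`, strictly when `p` is odd, except that a pair at `⊤` always counts as
progressive. -/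
def ProgPair {S : Type*} [LinearOrder S] [OrderTop S] (trunc : ℕ → S → S)
    (σ τ : S) (p : ℕ) : Prop :=
  trunc p τ ≤ trunc p σ ∧ (Odd p → trunc p τ < trunc p σ ∨ (σ = ⊤ ∧ τ = ⊤))

/-- The values `σ` that `lift(μ, v, w)` minimises over. -/
def liftCandidates {V S : Type*} [DecidableEq V] [LinearOrder S] [OrderTop S]
    (trunc : ℕ → S → S) (π : V → ℕ) (μ : V → S) (v w : V) : Set S :=
  {σ | μ v ≤ σ ∧ ProgPair trunc σ (Function.update μ v σ w) (π v)}

section Progressive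

variable {S : Type*} [LinearOrder S] [OrderTop S] {trunc : ℕ → S → S} {p : ℕ}

theorem ProgPair.of_le_right (htrMono : Monotone (trunc p)) (htrTop : trunc p ⊤ = ⊤)
    (htrTopIff : ∀ σ, trunc p σ = ⊤ → σ = ⊤) {σ τ τ' : S}
    (h : ProgPair trunc σ τ' p) (hτ : τ ≤ τ') : ProgPair trunc σ τ p := by
  obtain ⟨hle, hodd⟩ := h
  refine ⟨(htrMono hτ).trans hle, fun hp => ?_⟩
  rcases hodd hp with hlt | ⟨rfl, -⟩
  · exact Or.inl ((htrMono hτ).trans_lt hlt)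
  · by_cases hτtop : τ = ⊤
    · exact Or.inr ⟨rfl, hτtop⟩
    · left
      rw [htrTop]
      exact lt_top_iff_ne_top.mpr fun h => hτtop (htrTopIff τ h)

variable {V : Type*} [DecidableEq V] {π : V → ℕ}

theorem liftCandidates_antitone (htrMono : ∀ p, Monotone (trunc p))
    (htrTop : ∀ p, trunc p ⊤ = ⊤) (htrTopIff : ∀ p σ, trunc p σ = ⊤ → σ = ⊤)
    {μ ν : V → S} (hμν : μ ≤ ν) (v w : V) :
    liftCandidates trunc π ν v w ⊆ liftCandidates trunc π μ v w := by
  rintro σ ⟨hνσ, hprog⟩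
  have hupdate : Function.update μ v σ w ≤ Function.update ν v σ w := by
    rcases eq_or_ne w v with rfl | hwv
    · simp
    · simpa only [Function.update_of_ne hwv] using hμν w
  exact ⟨(hμν v).trans hνσ,
    hprog.of_le_right (htrMono _) (htrTop _) (htrTopIff _) hupdate⟩

end Progressive

section Extremum

variable {ι α : Type*} [Preorder α] {P : ι → Prop} {f g : ι → α} {a b : α}

theorem IsLeast.le_of_forall_le_range (hfg : ∀ i, f i ≤ g i)
    (ha : IsLeast {s | ∃ i, P i ∧ s = f i} a) (hb : IsLeast {s | ∃ i, P i ∧ s = g i} b) :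
    a ≤ b := by
  obtain ⟨i, hi, rfl⟩ := hb.1
  exact (ha.2 ⟨i, hi, rfl⟩).trans (hfg i)

theorem IsGreatest.le_of_forall_le_range (hfg : ∀ i, f i ≤ g i)
    (ha : IsGreatest {s | ∃ i, P i ∧ s = f i} a)
    (hb : IsGreatest {s | ∃ i, P i ∧ s = g i} b) : a ≤ b := by
  obtain ⟨i, hi, rfl⟩ := ha.1
  exact (hfg i).trans (hb.2 ⟨i, hi, rfl⟩)

end Extremum

theorem complete_lattice_and_lift_inflationary_monotone_general
    {V S : Type*} [DecidableEq V] [Fintype S] [LinearOrder S] [BoundedOrder S]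
    (E : V → V → Prop) (owner : V → Bool) (π : V → ℕ)
    (trunc : ℕ → S → S)
    (htrMono : ∀ p, Monotone (trunc p))
    (htrTop : ∀ p, trunc p ⊤ = ⊤)
    (htrTopIff : ∀ p σ, trunc p σ = ⊤ → σ = ⊤)
    (lft : (V → S) → V → V → S)
    (hlft : ∀ (μ : V → S) (v w : V),
      IsLeast {σ : S | μ v ≤ σ ∧
        ProgPair trunc σ (Function.update μ v σ w) (π v)} (lft μ v w))
    (LiftOp : V → (V → S) → (V → S))
    (hLiftOff : ∀ v (μ : V → S) (u : V), u ≠ v → LiftOp v μ u = μ u)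
    (hLiftEven : ∀ v (μ : V → S), owner v = true →
      IsLeast {s : S | ∃ w, E v w ∧ s = lft μ v w} (LiftOp v μ v))
    (hLiftOdd : ∀ v (μ : V → S), owner v = false →
      IsGreatest {s : S | ∃ w, E v w ∧ s = lft μ v w} (LiftOp v μ v)) :
    (∃ inst : CompleteLattice (V → S),
      ∀ μ ν : V → S, inst.le μ ν ↔ ∀ u, μ u ≤ ν u) ∧
    (∀ v (μ : V → S), μ ≤ LiftOp v μ) ∧
    (∀ v, Monotone (LiftOp v)) := by
  have hlftMono : ∀ {μ ν : V → S}, μ ≤ ν → ∀ v w, lft μ v w ≤ lft ν v w := fun hμν v w =>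
    (hlft _ v w).mono (hlft _ v w) (liftCandidates_antitone htrMono htrTop htrTopIff hμν v w)
  have hLiftEdge : ∀ v μ, ∃ w, LiftOp v μ v = lft μ v w := fun v μ => by
    cases how : owner v
    · obtain ⟨w, -, hw⟩ := (hLiftOdd v μ how).1; exact ⟨w, hw⟩
    · obtain ⟨w, -, hw⟩ := (hLiftEven v μ how).1; exact ⟨w, hw⟩
  refine ⟨⟨@Pi.instCompleteLattice V (fun _ => S) fun _ => Fintype.toCompleteLattice S,
    fun _ _ => Iff.rfl⟩, fun v μ u => ?_, fun v μ ν hμν u => ?_⟩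
  · rcases eq_or_ne u v with rfl | hu
    · obtain ⟨w, hw⟩ := hLiftEdge u μ
      exact hw ▸ (hlft μ u w).1.1
    · exact (hLiftOff v μ u hu).ge
  · rcases eq_or_ne u v with rfl | hu
    · cases how : owner u
      · exact (hLiftOdd u μ how).le_of_forall_le_range (hlftMono hμν u) (hLiftOdd u ν how)
      · exact (hLiftEven u μ how).le_of_forall_le_range (hlftMono hμν u) (hLiftEven u ν how)
    · rw [hLiftOff v μ u hu, hLiftOff v ν u hu]
      exact hμν u

/-- The set of mappings `V → S` from the (finite) vertex set of a parity game to the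
finite linear order `S = S^⊤_{η,d}` of bounded adaptive multi-counters with a top
element, ordered pointwise, is a complete lattice; and each lifting operator
`Lift_v` — which changes only the value at `v`, replacing it by the min (if Even owns
`v`) or the max (if Odd owns `v`), over outgoing edges `(v,w)`, of `lift(μ,v,w)`,
the least `σ ≥ μ(v)` making `(v,w)` progressive in `μ[v↦σ]` — is inflationary
and monotone. -/
theorem complete_lattice_and_lift_inflationary_monotone
    {V S : Type*} [Fintype V] [DecidableEq V] [Fintype S] [LinearOrder S] [BoundedOrder S]
    (E : V → V → Prop) (owner : V → Bool) (π : V → ℕ)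
    (hE : ∀ v, ∃ w, E v w)
    (trunc : ℕ → S → S)
    (htrMono : ∀ p, Monotone (trunc p))
    (htrTop : ∀ p, trunc p ⊤ = ⊤)
    (htrTopIff : ∀ p σ, trunc p σ = ⊤ → σ = ⊤)
    (lft : (V → S) → V → V → S)
    (hlft : ∀ (μ : V → S) (v w : V),
      IsLeast {σ : S | μ v ≤ σ ∧
        ProgPair trunc σ (Function.update μ v σ w) (π v)} (lft μ v w))
    (LiftOp : V → (V → S) → (V → S))
    (hLiftOff : ∀ v (μ : V → S) (u : V), u ≠ v → LiftOp v μ u = μ u)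
    (hLiftEven : ∀ v (μ : V → S), owner v = true →
      IsLeast {s : S | ∃ w, E v w ∧ s = lft μ v w} (LiftOp v μ v))
    (hLiftOdd : ∀ v (μ : V → S), owner v = false →
      IsGreatest {s : S | ∃ w, E v w ∧ s = lft μ v w} (LiftOp v μ v)) :
    (∃ inst : CompleteLattice (V → S),
      ∀ μ ν : V → S, inst.le μ ν ↔ ∀ u, μ u ≤ ν u) ∧
    (∀ v (μ : V → S), μ ≤ LiftOp v μ) ∧
    (∀ v, Monotone (LiftOp v)) :=
  complete_lattice_and_lift_inflationary_monotone_general E owner π trunc htrMono htrTop htrTopIff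
    lft hlft LiftOp hLiftOff hLiftEven hLiftOdd
end
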